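/- arXiv:0812.1540 — 3 statements merged into one kernel-verified Lean document; each statement's English description precedes it below -/
import Mathlib

section
/- If (Y_n) and (Z_n) are internested nested sequences of measurable sets and (Y_n) is regular, then (Z_n) is regular; moreover if each Y_n has positive measure then so does each Z_n, and for any measurable set X, the density m(X ∩ Y_n)/m(Y_n) tends to 1 if and only if m(X ∩ Z_n)/m(Z_n) tends to 1. -/
/-!
Internesting lets each sequence be squeezed between two members of the other, `k` steps apart:
`Y (j + 2k) ⊆ Z (j + k) ⊆ Y j`. Regularity of `Y` makes the measures of the outer two sets
comparable up to the factor `δ ^ (2k)`, so the relative measure of `Z (j + k) \ X` is at most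
`δ ^ (-2k)` times that of `Y j \ X`. The same squeeze gives `Z` the regularity constant
`δ ^ (2k + 1)` from step `k` on; the finitely many earlier steps only lower the constant.
Applying the comparison in both directions yields the equivalence of the density conditions.
-/

open MeasureTheory Filter
open scoped ENNReal

namespace ENNReal

theorem pow_mul_le_add_of_forall_mul_le_succ {a : ℕ → ℝ≥0∞} {δ : ℝ≥0∞}
    (h : ∀ n, δ * a n ≤ a (n + 1)) (j i : ℕ) : δ ^ i * a j ≤ a (j + i) := by
  induction i with
  | zero => simp
  | succ i ih =>
    calc δ ^ (i + 1) * a j = δ * (δ ^ i * a j) := by ring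
      _ ≤ δ * a (j + i) := by gcongr
      _ ≤ a (j + i + 1) := h _

theorem exists_pos_forall_mul_le_succ_of_le {a : ℕ → ℝ≥0∞} {δ : ℝ≥0∞} {N : ℕ}
    (h0 : ∀ n, a n ≠ 0) (htop : ∀ n, a n ≠ ∞) (hδ : 0 < δ)
    (h : ∀ n, N ≤ n → δ * a n ≤ a (n + 1)) :
    ∃ δ' : ℝ≥0∞, 0 < δ' ∧ ∀ n, δ' * a n ≤ a (n + 1) := by
  set ratio := (Finset.range N).inf fun n => a (n + 1) / a n
  refine ⟨min δ ratio, lt_min hδ ?_, fun n => ?_⟩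
  · exact (Finset.lt_inf_iff zero_lt_top).2 fun n _ => ENNReal.div_pos (h0 _) (htop _)
  rcases lt_or_ge n N with hn | hn
  · calc min δ ratio * a n ≤ a (n + 1) / a n * a n := by
          gcongr
          exact (min_le_right _ _).trans (Finset.inf_le (Finset.mem_range.2 hn))
      _ = a (n + 1) := ENNReal.div_mul_cancel (h0 n) (htop n)
  · exact (mul_le_mul' (min_le_left _ _) le_rfl).trans (h n hn)

theorem tendsto_nhds_one_iff_of_add_eq_one {ι : Type*} {l : Filter ι} {a b : ι → ℝ≥0∞}
    (hab : ∀ i, a i + b i = 1) :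
    Tendsto a l (nhds 1) ↔ Tendsto b l (nhds 0) := by
  have ha : a = fun i => 1 - b i := funext fun i =>
    ENNReal.eq_sub_of_add_eq (ne_top_of_le_ne_top one_ne_top (le_add_self.trans (hab i).le))
      (hab i)
  have hb : b = fun i => 1 - a i := funext fun i =>
    ENNReal.eq_sub_of_add_eq (ne_top_of_le_ne_top one_ne_top (le_self_add.trans (hab i).le))
      ((add_comm _ _).trans (hab i))
  constructor
  · intro h
    rw [hb]
    simpa using Tendsto.sub tendsto_const_nhds h (.inl one_ne_top)
  · intro h
    rw [ha]
    simpa using Tendsto.sub tendsto_const_nhds h (.inl one_ne_top)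

end ENNReal

namespace MeasureTheory

variable {Ω : Type*} [MeasurableSpace Ω] {m : Measure Ω}

theorem measure_inter_div_add_measure_diff_div {W X : Set Ω} (hX : MeasurableSet X)
    (h0 : m W ≠ 0) (htop : m W ≠ ∞) :
    m (X ∩ W) / m W + m (W \ X) / m W = 1 := by
  rw [ENNReal.div_add_div_same, Set.inter_comm, measure_inter_add_sdiff W hX,
    ENNReal.div_self h0 htop]

theorem tendsto_measure_inter_div_nhds_one_iff {W : ℕ → Set Ω} {X : Set Ω}
    (hX : MeasurableSet X) (h0 : ∀ n, m (W n) ≠ 0) (htop : ∀ n, m (W n) ≠ ∞) :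
    Tendsto (fun n => m (X ∩ W n) / m (W n)) atTop (nhds 1) ↔
      Tendsto (fun n => m (W n \ X) / m (W n)) atTop (nhds 0) :=
  ENNReal.tendsto_nhds_one_iff_of_add_eq_one fun n =>
    measure_inter_div_add_measure_diff_div hX (h0 n) (htop n)

theorem tendsto_measure_diff_div_of_subset {ι : Type*} {l : Filter ι} {W W' : ι → Set Ω}
    {X : Set Ω} {c : ℝ≥0∞} (hsub : ∀ i, W' i ⊆ W i) (hc : c ≠ 0)
    (hle : ∀ i, c * m (W i) ≤ m (W' i)) (h0 : ∀ i, m (W i) ≠ 0)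
    (h : Tendsto (fun i => m (W i \ X) / m (W i)) l (nhds 0)) :
    Tendsto (fun i => m (W' i \ X) / m (W' i)) l (nhds 0) := by
  have hupper : Tendsto (fun i => c⁻¹ * (m (W i \ X) / m (W i))) l (nhds 0) := by
    simpa using ENNReal.Tendsto.const_mul h (.inr (ENNReal.inv_ne_top.2 hc))
  refine tendsto_of_tendsto_of_tendsto_of_le_of_le tendsto_const_nhds hupper
    (fun _ => zero_le) (fun i => ?_)
  calc m (W' i \ X) / m (W' i)
      ≤ m (W i \ X) / (c * m (W i)) :=
        ENNReal.div_le_div (measure_mono (Set.sdiff_subset_sdiff_left (hsub i))) (hle i)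
    _ = c⁻¹ * (m (W i \ X) / m (W i)) := by
        rw [div_eq_mul_inv, ENNReal.mul_inv (.inl hc) (.inr (h0 i)), div_eq_mul_inv]
        ring

variable {Y Z : ℕ → Set Ω} {δ : ℝ≥0∞} {k : ℕ}

theorem pow_mul_measure_le_of_internested (hY : ∀ n, δ * m (Y n) ≤ m (Y (n + 1)))
    (hYZ : ∀ n, Y (n + k) ⊆ Z n) (j : ℕ) :
    δ ^ (2 * k) * m (Y j) ≤ m (Z (j + k)) :=
  calc δ ^ (2 * k) * m (Y j) ≤ m (Y (j + 2 * k)) :=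
        ENNReal.pow_mul_le_add_of_forall_mul_le_succ hY j _
    _ ≤ m (Z (j + k)) := measure_mono (by simpa [two_mul, add_assoc] using hYZ (j + k))

theorem pow_mul_measure_le_succ_of_internested (hY : ∀ n, δ * m (Y n) ≤ m (Y (n + 1)))
    (hYZ : ∀ n, Y (n + k) ⊆ Z n) (hZY : ∀ n, Z (n + k) ⊆ Y n) (n : ℕ) (hn : k ≤ n) :
    δ ^ (2 * k + 1) * m (Z n) ≤ m (Z (n + 1)) := by
  obtain ⟨j, rfl⟩ : ∃ j, n = j + k := ⟨n - k, (Nat.sub_add_cancel hn).symm⟩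
  calc δ ^ (2 * k + 1) * m (Z (j + k)) ≤ δ ^ (2 * k) * (δ * m (Y j)) := by
        rw [pow_succ, mul_assoc]
        gcongr
        exact hZY j
    _ ≤ δ ^ (2 * k) * m (Y (j + 1)) := by gcongr; exact hY j
    _ ≤ m (Z (j + k + 1)) := by
        simpa [add_right_comm] using pow_mul_measure_le_of_internested hY hYZ (j + 1)

theorem tendsto_measure_diff_div_of_internested {X : Set Ω} (hδ : δ ≠ 0)
    (hY0 : ∀ n, m (Y n) ≠ 0) (hY : ∀ n, δ * m (Y n) ≤ m (Y (n + 1)))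
    (hYZ : ∀ n, Y (n + k) ⊆ Z n) (hZY : ∀ n, Z (n + k) ⊆ Y n)
    (h : Tendsto (fun n => m (Y n \ X) / m (Y n)) atTop (nhds 0)) :
    Tendsto (fun n => m (Z n \ X) / m (Z n)) atTop (nhds 0) := by
  rw [← tendsto_add_atTop_iff_nat k]
  exact tendsto_measure_diff_div_of_subset hZY (pow_ne_zero _ hδ)
    (pow_mul_measure_le_of_internested hY hYZ) hY0 h

end MeasureTheory

theorem internested_regular_density_general {Ω : Type*} [MeasurableSpace Ω]
    (m : Measure Ω) [IsFiniteMeasure m]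
    (Y Z : ℕ → Set Ω)
    (hYreg : ∃ δ : ℝ≥0∞, 0 < δ ∧ ∀ n, 0 < m (Y n) ∧ δ * m (Y n) ≤ m (Y (n + 1)))
    (hinter : ∃ k : ℕ, 1 ≤ k ∧ ∀ n, Y (n + k) ⊆ Z n ∧ Z (n + k) ⊆ Y n) :
    (∃ δ : ℝ≥0∞, 0 < δ ∧ ∀ n, 0 < m (Z n) ∧ δ * m (Z n) ≤ m (Z (n + 1))) ∧
    (∀ n, 0 < m (Z n)) ∧
    ∀ X : Set Ω, MeasurableSet X →
      (Tendsto (fun n => m (X ∩ Y n) / m (Y n)) atTop (nhds 1) ↔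
       Tendsto (fun n => m (X ∩ Z n) / m (Z n)) atTop (nhds 1)) := by
  obtain ⟨δ, hδ, hYδ⟩ := hYreg
  obtain ⟨k, -, hk⟩ := hinter
  have hYZ n := (hk n).1
  have hZY n := (hk n).2
  have hY n := (hYδ n).2
  have hYpos n := (hYδ n).1
  have hZpos n : 0 < m (Z n) := (hYpos (n + k)).trans_le (measure_mono (hYZ n))
  obtain ⟨δ', hδ', hZ⟩ := ENNReal.exists_pos_forall_mul_le_succ_of_le
    (fun n => (hZpos n).ne') (fun n => measure_ne_top m _) (ENNReal.pow_pos hδ _)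
    (pow_mul_measure_le_succ_of_internested hY hYZ hZY)
  refine ⟨⟨δ', hδ', fun n => ⟨hZpos n, hZ n⟩⟩, hZpos, fun X hX => ?_⟩
  rw [tendsto_measure_inter_div_nhds_one_iff hX (fun n => (hYpos n).ne')
      (fun n => measure_ne_top m _),
    tendsto_measure_inter_div_nhds_one_iff hX (fun n => (hZpos n).ne')
      (fun n => measure_ne_top m _)]
  exact ⟨tendsto_measure_diff_div_of_internested hδ.ne' (fun n => (hYpos n).ne') hY hYZ hZY,
    tendsto_measure_diff_div_of_internested hδ'.ne' (fun n => (hZpos n).ne') hZ hZY hYZ⟩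

/-- If `(Y n)` and `(Z n)` are internested nested sequences of measurable sets and `(Y n)`
is regular (there is `δ > 0` with `m (Y n) > 0` and `m (Y (n+1)) ≥ δ · m (Y n)` for all `n`),
then `(Z n)` is regular, each `Z n` has positive measure, and for any measurable set `X`,
`m (X ∩ Y n) / m (Y n) → 1` if and only if `m (X ∩ Z n) / m (Z n) → 1`. -/
theorem internested_regular_density {Ω : Type*} [MeasurableSpace Ω]
    (m : Measure Ω) [IsFiniteMeasure m]
    (Y Z : ℕ → Set Ω)
    (hYmeas : ∀ n, MeasurableSet (Y n)) (hZmeas : ∀ n, MeasurableSet (Z n))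
    (hYnest : ∀ n, Y (n + 1) ⊆ Y n) (hZnest : ∀ n, Z (n + 1) ⊆ Z n)
    (hYreg : ∃ δ : ℝ≥0∞, 0 < δ ∧ ∀ n, 0 < m (Y n) ∧ δ * m (Y n) ≤ m (Y (n + 1)))
    (hinter : ∃ k : ℕ, 1 ≤ k ∧ ∀ n, Y (n + k) ⊆ Z n ∧ Z (n + k) ⊆ Y n) :
    (∃ δ : ℝ≥0∞, 0 < δ ∧ ∀ n, 0 < m (Z n) ∧ δ * m (Z n) ≤ m (Z (n + 1))) ∧
    (∀ n, 0 < m (Z n)) ∧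
    ∀ X : Set Ω, MeasurableSet X →
      (Tendsto (fun n => m (X ∩ Y n) / m (Y n)) atTop (nhds 1) ↔
       Tendsto (fun n => m (X ∩ Z n) / m (Z n)) atTop (nhds 1)) :=
  internested_regular_density_general m Y Z hYreg hinter
end

section
/- Semicontinuity of Lyapunov exponent sums under small-measure modifications: given a bounded cocycle A, a bound C > ‖A^{±1}‖_∞, and ε > 0, there exists δ > 0 such that for every cocycle B with ‖B^{±1}‖_∞ < C and μ({x : B(x) ≠ A(x)}) < δ, one has L_i(B) < L_i(A) + ε. -/
/-! Since `L_i(A)` is an infimum, some finite-time average `(1/n) ∫ log ‖Λ^i A^n‖` lies within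
`ε/2` of it. For cocycles bounded by `C`, the integrand `log ‖Λ^i B^n‖` is confined to an interval
`[-n i log C, log √(i!) + n i log C]` (the lower end because `‖Λ^i M‖ ≥ ‖M⁻¹‖^{-i}`), so the
`n`-step integrands of `A` and `B` differ by at most the length `K_n` of that interval, and only
where `B^n ≠ A^n`. That set lies in the union of the first `n` preimages of `{B ≠ A}` under the
measure-preserving `f`, so its measure is at most `n μ{B ≠ A}`. Hence
`L_i(B) ≤ (1/n) ∫ log ‖Λ^i B^n‖ ≤ L_i(A) + ε/2 + K_n μ{B ≠ A}`, and `δ` is chosen from `K_n`. -/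

open MeasureTheory Filter
open scoped ENNReal

/-- Operator norm (on Euclidean space) of a square real matrix. -/
noncomputable def matOpNorm {d : ℕ} (M : Matrix (Fin d) (Fin d) ℝ) : ℝ :=
  ‖LinearMap.toContinuousLinearMap (Matrix.toEuclideanLin M)‖

/-- The operator norm of the `i`-th exterior power of a matrix `A`. -/
noncomputable def extPowNorm (i d : ℕ) (A : Matrix (Fin d) (Fin d) ℝ) : ℝ :=
  sSup { r : ℝ | ∃ v : Fin i → (Fin d → ℝ), (∀ a, ∑ j, v a j ^ 2 ≤ 1) ∧
    r = Real.sqrt (Matrix.det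
      (Matrix.of fun a b : Fin i => ∑ j, A.mulVec (v a) j * A.mulVec (v b) j)) }

/-- The cocycle products `A^n_f(x) = A(f^{n-1} x) ⋯ A(x)`. -/
noncomputable def cocycleProd {X : Type*} (f : X → X) (d : ℕ)
    (A : X → Matrix (Fin d) (Fin d) ℝ) : ℕ → X → Matrix (Fin d) (Fin d) ℝ
  | 0, _ => 1
  | n + 1, x => cocycleProd f d A n (f x) * A x

/-- `L_i(A) = inf_{n ≥ 1} (1/n) ∫ log ‖Λ^i A^n_f(x)‖ dμ(x)`. -/
noncomputable def lyapSum {X : Type*} [MeasurableSpace X] (μ : Measure X) (f : X → X)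
    (d i : ℕ) (A : X → Matrix (Fin d) (Fin d) ℝ) : ℝ :=
  ⨅ n : ℕ, (1 / (n + 1 : ℝ)) *
    ∫ x, Real.log (extPowNorm i d (cocycleProd f d A (n + 1) x)) ∂μ

open Matrix
open scoped Matrix.Norms.L2Operator

namespace Matrix

variable {d : ℕ}

theorem l2_opNorm_one_le : ‖(1 : Matrix (Fin d) (Fin d) ℝ)‖ ≤ 1 := by
  rw [Matrix.cstar_norm_def, map_one]
  exact ContinuousLinearMap.norm_id_le

theorem sum_sq_mulVec_le (M : Matrix (Fin d) (Fin d) ℝ) (v : Fin d → ℝ) :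
    ∑ j, (M *ᵥ v) j ^ 2 ≤ ‖M‖ ^ 2 * ∑ j, v j ^ 2 := by
  have h := M.l2_opNorm_mulVec (WithLp.toLp 2 v)
  have hsq : ∀ w : Fin d → ℝ, ‖WithLp.toLp 2 w‖ ^ 2 = ∑ j, w j ^ 2 := fun w => by
    simp [EuclideanSpace.norm_sq_eq]
  rw [← hsq, ← hsq, ← mul_pow]
  exact pow_le_pow_left₀ (norm_nonneg _) h 2

end Matrix

section ExteriorPowerNorm

variable {d i : ℕ}

/-- The `i`-volume of the parallelotope spanned by the vectors `M *ᵥ v a`. -/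
noncomputable def imageVolume (M : Matrix (Fin d) (Fin d) ℝ) (v : Fin i → Fin d → ℝ) : ℝ :=
  √(Matrix.of fun a b => M *ᵥ v a ⬝ᵥ M *ᵥ v b).det

theorem extPowNorm_eq_sSup (M : Matrix (Fin d) (Fin d) ℝ) :
    extPowNorm i d M =
      sSup {r | ∃ v : Fin i → Fin d → ℝ, (∀ a, ∑ j, v a j ^ 2 ≤ 1) ∧ r = imageVolume M v} :=
  rfl

theorem imageVolume_le (M : Matrix (Fin d) (Fin d) ℝ) {v : Fin i → Fin d → ℝ}
    (hv : ∀ a, ∑ j, v a j ^ 2 ≤ 1) : imageVolume M v ≤ √(i.factorial) * ‖M‖ ^ i := by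
  have hnorm : ∀ a, ∑ j, (M *ᵥ v a) j ^ 2 ≤ ‖M‖ ^ 2 := fun a =>
    (sum_sq_mulVec_le M (v a)).trans (mul_le_of_le_one_right (by positivity) (hv a))
  have hentry : ∀ a b, |M *ᵥ v a ⬝ᵥ M *ᵥ v b| ≤ ‖M‖ ^ 2 := fun a b =>
    abs_le_of_sq_le_sq (by
      calc (M *ᵥ v a ⬝ᵥ M *ᵥ v b) ^ 2 ≤ (∑ j, (M *ᵥ v a) j ^ 2) * ∑ j, (M *ᵥ v b) j ^ 2 :=
            Finset.sum_mul_sq_le_sq_mul_sq _ _ _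
        _ ≤ (‖M‖ ^ 2) ^ 2 := by rw [sq (‖M‖ ^ 2)]; gcongr <;> exact hnorm _)
      (by positivity)
  have hdet := Matrix.det_le (abv := AbsoluteValue.abs) (A := Matrix.of fun a b =>
    M *ᵥ v a ⬝ᵥ M *ᵥ v b) fun a b => hentry a b
  rw [Fintype.card_fin, nsmul_eq_mul] at hdet
  calc imageVolume M v ≤ √(i.factorial * (‖M‖ ^ 2) ^ i) :=
        Real.sqrt_le_sqrt ((le_abs_self _).trans hdet)
    _ = √(i.factorial) * ‖M‖ ^ i := by
        rw [Real.sqrt_mul (by positivity), ← pow_mul, mul_comm 2, pow_mul,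
          Real.sqrt_sq (by positivity)]

theorem bddAbove_imageVolume (M : Matrix (Fin d) (Fin d) ℝ) :
    BddAbove {r | ∃ v : Fin i → Fin d → ℝ, (∀ a, ∑ j, v a j ^ 2 ≤ 1) ∧ r = imageVolume M v} :=
  ⟨_, by rintro _ ⟨v, hv, rfl⟩; exact imageVolume_le M hv⟩

theorem imageVolume_le_extPowNorm (M : Matrix (Fin d) (Fin d) ℝ) {v : Fin i → Fin d → ℝ}
    (hv : ∀ a, ∑ j, v a j ^ 2 ≤ 1) : imageVolume M v ≤ extPowNorm i d M :=
  le_csSup (bddAbove_imageVolume M) ⟨v, hv, rfl⟩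

theorem extPowNorm_le (M : Matrix (Fin d) (Fin d) ℝ) :
    extPowNorm i d M ≤ √(i.factorial) * ‖M‖ ^ i :=
  csSup_le ⟨_, 0, fun a => by simp, rfl⟩ (by rintro _ ⟨v, hv, rfl⟩; exact imageVolume_le M hv)

theorem inv_pow_le_extPowNorm (hid : i ≤ d) {M : Matrix (Fin d) (Fin d) ℝ} (hM : IsUnit M.det)
    {c : ℝ} (hc : 0 < c) (hMc : ‖M⁻¹‖ ≤ c) : c⁻¹ ^ i ≤ extPowNorm i d M := by
  -- The vectors `M⁻¹ (c⁻¹ eₐ)` lie in the unit ball and `M` maps them to the orthogonal `c⁻¹ eₐ`.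
  set e : Fin i → Fin d → ℝ := fun a => c⁻¹ • Pi.single (Fin.castLE hid a) 1
  have he : ∀ a, ∑ j, e a j ^ 2 = c⁻¹ ^ 2 := fun a => by
    simp [e, Pi.single_apply]
  have hunit : ∀ a, ∑ j, (M⁻¹ *ᵥ e a) j ^ 2 ≤ 1 := fun a =>
    calc ∑ j, (M⁻¹ *ᵥ e a) j ^ 2 ≤ ‖M⁻¹‖ ^ 2 * c⁻¹ ^ 2 := (he a) ▸ sum_sq_mulVec_le _ _
      _ ≤ c ^ 2 * c⁻¹ ^ 2 := by gcongr
      _ = 1 := by rw [← mul_pow, mul_inv_cancel₀ hc.ne', one_pow]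
  have hgram : (Matrix.of fun a b => M *ᵥ (M⁻¹ *ᵥ e a) ⬝ᵥ M *ᵥ (M⁻¹ *ᵥ e b)) =
      c⁻¹ ^ 2 • (1 : Matrix (Fin i) (Fin i) ℝ) := by
    ext a b
    simp [Matrix.mulVec_mulVec, Matrix.mul_nonsing_inv _ hM, e, Matrix.one_apply,
      Pi.single_apply, Fin.castLE_inj, sq, eq_comm]
  calc c⁻¹ ^ i = imageVolume M fun a => M⁻¹ *ᵥ e a := by
        rw [imageVolume, hgram, Matrix.det_smul, Matrix.det_one, mul_one, Fintype.card_fin,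
          ← pow_mul, mul_comm 2, pow_mul, Real.sqrt_sq (by positivity)]
    _ ≤ extPowNorm i d M := imageVolume_le_extPowNorm M hunit

theorem continuous_imageVolume (v : Fin i → Fin d → ℝ) :
    Continuous fun M : Matrix (Fin d) (Fin d) ℝ => imageVolume M v := by
  unfold imageVolume
  fun_prop

theorem lowerSemicontinuous_extPowNorm :
    LowerSemicontinuous (extPowNorm i d) := by
  intro M y hy
  rw [extPowNorm_eq_sSup] at hy
  obtain ⟨_, ⟨v, hv, rfl⟩, hyv⟩ :=
    exists_lt_of_lt_csSup (by exact ⟨_, 0, fun a => by simp, rfl⟩) hy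
  filter_upwards [continuousAt_const.eventually_lt (continuous_imageVolume v).continuousAt hyv]
    with N hN
  exact hN.trans_le (imageVolume_le_extPowNorm N hv)

end ExteriorPowerNorm

instance {m n : Type*} : MeasurableSpace (Matrix m n ℝ) :=
  inferInstanceAs (MeasurableSpace (m → n → ℝ))

instance {m n : Type*} [Countable m] [Countable n] : BorelSpace (Matrix m n ℝ) :=
  inferInstanceAs (BorelSpace (m → n → ℝ))

theorem measurable_extPowNorm {d i : ℕ} : Measurable (extPowNorm i d) :=
  lowerSemicontinuous_extPowNorm.measurable

section Cocycle

variable {X : Type*} {f : X → X} {d : ℕ}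

@[simp]
theorem cocycleProd_zero (A : X → Matrix (Fin d) (Fin d) ℝ) (x : X) :
    cocycleProd f d A 0 x = 1 :=
  rfl

theorem cocycleProd_succ (A : X → Matrix (Fin d) (Fin d) ℝ) (n : ℕ) (x : X) :
    cocycleProd f d A (n + 1) x = cocycleProd f d A n (f x) * A x :=
  rfl

theorem isUnit_det_cocycleProd {A : X → Matrix (Fin d) (Fin d) ℝ} (hA : ∀ x, IsUnit (A x).det)
    (n : ℕ) (x : X) : IsUnit (cocycleProd f d A n x).det := by
  induction n generalizing x with
  | zero => simp
  | succ n ih => simpa [cocycleProd_succ] using (ih (f x)).mul (hA x)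

theorem norm_cocycleProd_le {A : X → Matrix (Fin d) (Fin d) ℝ} {C : ℝ} (hC : 0 ≤ C) {x : X}
    (h : ∀ k, ‖A (f^[k] x)‖ ≤ C) (n : ℕ) : ‖cocycleProd f d A n x‖ ≤ C ^ n := by
  induction n generalizing x with
  | zero => simpa using l2_opNorm_one_le
  | succ n ih =>
    calc ‖cocycleProd f d A (n + 1) x‖ ≤ ‖cocycleProd f d A n (f x)‖ * ‖A x‖ :=
          Matrix.l2_opNorm_mul _ _
      _ ≤ C ^ n * C := by
          gcongr
          · exact ih fun k => by simpa using h (k + 1)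
          · simpa using h 0
      _ = C ^ (n + 1) := (pow_succ C n).symm

theorem norm_inv_cocycleProd_le {A : X → Matrix (Fin d) (Fin d) ℝ} {C : ℝ} (hC : 0 ≤ C)
    {x : X} (h : ∀ k, ‖(A (f^[k] x))⁻¹‖ ≤ C) (n : ℕ) :
    ‖(cocycleProd f d A n x)⁻¹‖ ≤ C ^ n := by
  induction n generalizing x with
  | zero => simpa using l2_opNorm_one_le
  | succ n ih =>
    calc ‖(cocycleProd f d A (n + 1) x)⁻¹‖ ≤ ‖(A x)⁻¹‖ * ‖(cocycleProd f d A n (f x))⁻¹‖ := by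
          rw [cocycleProd_succ, Matrix.mul_inv_rev]
          exact Matrix.l2_opNorm_mul _ _
      _ ≤ C * C ^ n := by
          gcongr
          · simpa using h 0
          · exact ih fun k => by simpa using h (k + 1)
      _ = C ^ (n + 1) := (pow_succ' C n).symm

theorem cocycleProd_eq_of_forall_lt {A B : X → Matrix (Fin d) (Fin d) ℝ} {n : ℕ} {x : X}
    (h : ∀ k < n, B (f^[k] x) = A (f^[k] x)) : cocycleProd f d B n x = cocycleProd f d A n x := by
  induction n generalizing x with
  | zero => rfl
  | succ n ih =>
    rw [cocycleProd_succ, cocycleProd_succ, ih fun k hk => by simpa using h (k + 1) (by omega),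
      (by simpa using h 0 n.succ_pos : B x = A x)]

theorem setOf_cocycleProd_ne_subset (A B : X → Matrix (Fin d) (Fin d) ℝ) (n : ℕ) :
    {x | cocycleProd f d B n x ≠ cocycleProd f d A n x} ⊆
      ⋃ k ∈ Finset.range n, f^[k] ⁻¹' {x | B x ≠ A x} := by
  intro x hx
  by_contra hx'
  exact hx <| cocycleProd_eq_of_forall_lt fun k hk =>
    not_not.mp fun hne => hx' (Set.mem_biUnion (Finset.mem_range.2 hk) hne)

variable [MeasurableSpace X]

theorem measurable_cocycleProd (hf : Measurable f) {A : X → Matrix (Fin d) (Fin d) ℝ}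
    (hA : Measurable A) (n : ℕ) : Measurable (cocycleProd f d A n) := by
  induction n with
  | zero => exact measurable_const
  | succ n ih => exact continuous_mul.measurable2 (ih.comp hf) hA

theorem measure_setOf_cocycleProd_ne_le {μ : Measure X} (hf : MeasurePreserving f μ μ)
    (A B : X → Matrix (Fin d) (Fin d) ℝ) (n : ℕ) :
    μ {x | cocycleProd f d B n x ≠ cocycleProd f d A n x} ≤ n * μ {x | B x ≠ A x} :=
  calc μ {x | cocycleProd f d B n x ≠ cocycleProd f d A n x}
      ≤ ∑ k ∈ Finset.range n, μ (f^[k] ⁻¹' {x | B x ≠ A x}) :=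
        (measure_mono (setOf_cocycleProd_ne_subset A B n)).trans (measure_biUnion_finset_le _ _)
    _ ≤ ∑ k ∈ Finset.range n, μ {x | B x ≠ A x} :=
        Finset.sum_le_sum fun k _ => (hf.iterate k).measure_preimage_le _
    _ = n * μ {x | B x ≠ A x} := by simp

theorem measureReal_setOf_cocycleProd_ne_le {μ : Measure X} [IsFiniteMeasure μ]
    (hf : MeasurePreserving f μ μ) (A B : X → Matrix (Fin d) (Fin d) ℝ) (n : ℕ) :
    μ.real {x | cocycleProd f d B n x ≠ cocycleProd f d A n x} ≤ n * μ.real {x | B x ≠ A x} := by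
  rw [measureReal_def, measureReal_def, ← ENNReal.toReal_natCast, ← ENNReal.toReal_mul]
  exact ENNReal.toReal_mono (by finiteness) (measure_setOf_cocycleProd_ne_le hf A B n)

end Cocycle

theorem integral_sub_le_of_eq_off {X : Type*} [MeasurableSpace X] {μ : Measure X}
    [IsFiniteMeasure μ]
    {g h : X → ℝ} {a b : ℝ} (hg : Integrable g μ) (hh : Integrable h μ)
    (hgb : ∀ᵐ x ∂μ, g x ∈ Set.Icc a b) (hhb : ∀ᵐ x ∂μ, h x ∈ Set.Icc a b)
    {E : Set X} (hE : MeasurableSet E) (hgh : ∀ x ∉ E, g x = h x) :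
    ∫ x, g x ∂μ - ∫ x, h x ∂μ ≤ (b - a) * μ.real E := by
  have hle : ∀ᵐ x ∂μ, g x - h x ≤ E.indicator (fun _ => b - a) x := by
    filter_upwards [hgb, hhb] with x hgx hhx
    by_cases hx : x ∈ E
    · rw [Set.indicator_of_mem hx]
      linarith [hgx.2, hhx.1]
    · rw [Set.indicator_of_notMem hx, hgh x hx, sub_self]
  calc ∫ x, g x ∂μ - ∫ x, h x ∂μ = ∫ x, g x - h x ∂μ := (integral_sub hg hh).symm
    _ ≤ ∫ x, E.indicator (fun _ => b - a) x ∂μ :=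
        integral_mono_ae (hg.sub hh) ((integrable_const _).indicator hE) hle
    _ = (b - a) * μ.real E := by rw [integral_indicator_const _ hE, smul_eq_mul, mul_comm]

section BoundedCocycle

variable {X : Type*} [MeasurableSpace X] {μ : Measure X} {f : X → X} {d i : ℕ} {C : ℝ}

structure IsBoundedCocycle (μ : Measure X) (C : ℝ) (A : X → Matrix (Fin d) (Fin d) ℝ) :
    Prop where
  measurable : Measurable A
  isUnit_det : ∀ x, IsUnit (A x).det
  ae_norm_le : ∀ᵐ x ∂μ, ‖A x‖ ≤ C ∧ ‖(A x)⁻¹‖ ≤ C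

/-- The average over `n + 1` steps whose infimum over `n` is `lyapSum`. -/
noncomputable def lyapTerm (μ : Measure X) (f : X → X) (d i : ℕ)
    (A : X → Matrix (Fin d) (Fin d) ℝ) (n : ℕ) : ℝ :=
  (1 / (n + 1 : ℝ)) * ∫ x, Real.log (extPowNorm i d (cocycleProd f d A (n + 1) x)) ∂μ

theorem lyapSum_eq_iInf_lyapTerm (A : X → Matrix (Fin d) (Fin d) ℝ) :
    lyapSum μ f d i A = ⨅ n, lyapTerm μ f d i A n :=
  rfl

namespace IsBoundedCocycle

variable {A B : X → Matrix (Fin d) (Fin d) ℝ}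

theorem ae_log_extPowNorm_mem_Icc (hA : IsBoundedCocycle μ C A)
    (hf : Measure.QuasiMeasurePreserving f μ μ) (hid : i ≤ d) (hC : 0 < C) (n : ℕ) :
    ∀ᵐ x ∂μ, Real.log (extPowNorm i d (cocycleProd f d A n x)) ∈
      Set.Icc (-(n * i * Real.log C)) (Real.log √(i.factorial) + n * i * Real.log C) := by
  filter_upwards [ae_all_iff.2 fun k => (hf.iterate k).ae hA.ae_norm_le] with x hx
  have hlow : (C ^ n)⁻¹ ^ i ≤ extPowNorm i d (cocycleProd f d A n x) :=
    inv_pow_le_extPowNorm hid (isUnit_det_cocycleProd hA.isUnit_det n x) (by positivity)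
      (norm_inv_cocycleProd_le hC.le (fun k => (hx k).2) n)
  have hup : extPowNorm i d (cocycleProd f d A n x) ≤ √(i.factorial) * (C ^ n) ^ i :=
    (extPowNorm_le _).trans (by gcongr; exact norm_cocycleProd_le hC.le (fun k => (hx k).1) n)
  constructor
  · calc -(n * i * Real.log C) = Real.log ((C ^ n)⁻¹ ^ i) := by
          rw [Real.log_pow, Real.log_inv, Real.log_pow]
          ring
      _ ≤ _ := Real.log_le_log (by positivity) hlow
  · calc Real.log (extPowNorm i d (cocycleProd f d A n x))
        ≤ Real.log (√(i.factorial) * (C ^ n) ^ i) :=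
          Real.log_le_log ((by positivity : (0 : ℝ) < _).trans_le hlow) hup
      _ = _ := by
          rw [Real.log_mul (by positivity) (by positivity), Real.log_pow, Real.log_pow]
          ring

theorem integrable_log_extPowNorm [IsFiniteMeasure μ] (hA : IsBoundedCocycle μ C A)
    (hf : MeasurePreserving f μ μ) (hid : i ≤ d) (hC : 0 < C) (n : ℕ) :
    Integrable (fun x => Real.log (extPowNorm i d (cocycleProd f d A n x))) μ :=
  .of_mem_Icc _ _
    (Real.measurable_log.comp (measurable_extPowNorm.comp
      (measurable_cocycleProd hf.measurable hA.measurable n))).aemeasurable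
    (hA.ae_log_extPowNorm_mem_Icc hf.quasiMeasurePreserving hid hC n)

theorem neg_mul_log_le_lyapTerm [IsProbabilityMeasure μ] (hA : IsBoundedCocycle μ C A)
    (hf : MeasurePreserving f μ μ) (hid : i ≤ d) (hC : 0 < C) (n : ℕ) :
    -(i * Real.log C) ≤ lyapTerm μ f d i A n := by
  have hlow : -((n + 1) * i * Real.log C) ≤
      ∫ x, Real.log (extPowNorm i d (cocycleProd f d A (n + 1) x)) ∂μ := by
    have h := integral_mono_ae (integrable_const _)
      (hA.integrable_log_extPowNorm hf hid hC (n + 1))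
      ((hA.ae_log_extPowNorm_mem_Icc hf.quasiMeasurePreserving hid hC (n + 1)).mono
        fun x hx => hx.1)
    rw [integral_const, probReal_univ, one_smul] at h
    push_cast at h
    linarith
  rw [lyapTerm, one_div, ← div_eq_inv_mul, le_div_iff₀ (by positivity)]
  linarith

theorem lyapSum_le_lyapTerm [IsProbabilityMeasure μ] (hA : IsBoundedCocycle μ C A)
    (hf : MeasurePreserving f μ μ) (hid : i ≤ d) (hC : 0 < C) (n : ℕ) :
    lyapSum μ f d i A ≤ lyapTerm μ f d i A n :=
  ciInf_le ⟨_, Set.forall_mem_range.2 (hA.neg_mul_log_le_lyapTerm hf hid hC)⟩ n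

theorem lyapTerm_le_add [IsProbabilityMeasure μ] (hB : IsBoundedCocycle μ C B)
    (hA : IsBoundedCocycle μ C A) (hf : MeasurePreserving f μ μ) (hid : i ≤ d) (hC : 0 < C)
    (n : ℕ) :
    lyapTerm μ f d i B n ≤ lyapTerm μ f d i A n +
      (Real.log √(i.factorial) + 2 * (n + 1) * i * Real.log C) * μ.real {x | B x ≠ A x} := by
  set gap := Real.log √(i.factorial) + 2 * (n + 1) * i * Real.log C
  set E := {x | cocycleProd f d B (n + 1) x ≠ cocycleProd f d A (n + 1) x}
  have hAmem := hA.ae_log_extPowNorm_mem_Icc hf.quasiMeasurePreserving hid hC (n + 1)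
  have hlen : Real.log √(i.factorial) + ((n + 1 : ℕ) : ℝ) * i * Real.log C -
      -(((n + 1 : ℕ) : ℝ) * i * Real.log C) = gap := by
    push_cast
    ring
  have hgap : 0 ≤ gap := by
    obtain ⟨x, hx⟩ := hAmem.exists
    linarith [hx.1, hx.2]
  have hE : MeasurableSet E :=
    (measurableSet_eq_fun (measurable_cocycleProd hf.measurable hB.measurable _)
      (measurable_cocycleProd hf.measurable hA.measurable _)).compl
  have hint := integral_sub_le_of_eq_off (hB.integrable_log_extPowNorm hf hid hC (n + 1))
    (hA.integrable_log_extPowNorm hf hid hC (n + 1))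
    (hB.ae_log_extPowNorm_mem_Icc hf.quasiMeasurePreserving hid hC (n + 1)) hAmem hE
    fun x hx => by rw [not_not.mp hx]
  rw [hlen] at hint
  have hμE : μ.real E ≤ (n + 1) * μ.real {x | B x ≠ A x} := by
    exact_mod_cast measureReal_setOf_cocycleProd_ne_le hf A B (n + 1)
  rw [lyapTerm, lyapTerm, one_div, inv_mul_le_iff₀ (by positivity), mul_add,
    ← mul_assoc, mul_inv_cancel₀ (by positivity), one_mul]
  calc ∫ x, Real.log (extPowNorm i d (cocycleProd f d B (n + 1) x)) ∂μ
      ≤ ∫ x, Real.log (extPowNorm i d (cocycleProd f d A (n + 1) x)) ∂μ + gap * μ.real E := by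
        linarith
    _ ≤ _ := by
        rw [mul_left_comm]
        gcongr

end IsBoundedCocycle

end BoundedCocycle

theorem lyapSum_semicontinuous_small_modification_general {X : Type*} [MeasurableSpace X]
    (μ : Measure X) [IsProbabilityMeasure μ] (f : X → X) (hf : Ergodic f μ)
    (d i : ℕ) (hid : i ≤ d)
    (A : X → Matrix (Fin d) (Fin d) ℝ) (hAmeas : Measurable fun x i j => A x i j)
    (hAinv : ∀ x, IsUnit (A x).det)
    (C : ℝ) (hAbd : ∀ᵐ x ∂μ, matOpNorm (A x) < C ∧ matOpNorm (A x)⁻¹ < C)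
    (ε : ℝ) (hε : 0 < ε) :
    ∃ δ > (0 : ℝ), ∀ B : X → Matrix (Fin d) (Fin d) ℝ,
      (Measurable fun x i j => B x i j) →
      (∀ x, IsUnit (B x).det) →
      (∀ᵐ x ∂μ, matOpNorm (B x) < C ∧ matOpNorm (B x)⁻¹ < C) →
      μ {x | B x ≠ A x} < ENNReal.ofReal δ →
      lyapSum μ f d i B < lyapSum μ f d i A + ε := by
  have hmp := hf.toMeasurePreserving
  obtain ⟨x₀, hx₀⟩ := hAbd.exists
  have hC : 0 < C := (norm_nonneg _).trans_lt hx₀.1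
  obtain ⟨n, hn⟩ : ∃ n, lyapTerm μ f d i A n < lyapSum μ f d i A + ε / 2 :=
    exists_lt_of_ciInf_lt (by rw [← lyapSum_eq_iInf_lyapTerm]; linarith)
  set gap := Real.log √(i.factorial) + 2 * (n + 1) * i * Real.log C
  set δ := ε / 2 / (|gap| + 1)
  have hgapδ : |gap| * δ < ε / 2 := by
    rw [mul_div_assoc', div_lt_iff₀ (by positivity)]
    nlinarith [abs_nonneg gap]
  refine ⟨δ, by positivity, fun B hBmeas hBinv hBbd hBA => ?_⟩
  have hA : IsBoundedCocycle μ C A := ⟨hAmeas, hAinv, hAbd.mono fun x hx => ⟨hx.1.le, hx.2.le⟩⟩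
  have hB : IsBoundedCocycle μ C B := ⟨hBmeas, hBinv, hBbd.mono fun x hx => ⟨hx.1.le, hx.2.le⟩⟩
  have hBAδ : μ.real {x | B x ≠ A x} ≤ δ := ENNReal.toReal_le_of_le_ofReal (by positivity) hBA.le
  calc lyapSum μ f d i B ≤ lyapTerm μ f d i B n := hB.lyapSum_le_lyapTerm hmp hid hC n
    _ ≤ lyapTerm μ f d i A n + gap * μ.real {x | B x ≠ A x} := hB.lyapTerm_le_add hA hmp hid hC n
    _ ≤ lyapTerm μ f d i A n + |gap| * δ := by
        gcongr
        exact le_abs_self gap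
    _ < lyapSum μ f d i A + ε := by linarith

/-- Semicontinuity of Lyapunov exponent sums under small-measure modifications:
given a bounded cocycle `A`, a bound `C > ‖A^{±1}‖_∞` and `ε > 0`, there is `δ > 0`
such that every cocycle `B` with `‖B^{±1}‖_∞ < C` and `μ {x : B x ≠ A x} < δ`
satisfies `L_i(B) < L_i(A) + ε`. -/
theorem lyapSum_semicontinuous_small_modification {X : Type*} [MeasurableSpace X]
    (μ : Measure X) [IsProbabilityMeasure μ] (f : X → X) (hf : Ergodic f μ)
    (d i : ℕ) (hi : 1 ≤ i) (hid : i ≤ d)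
    (A : X → Matrix (Fin d) (Fin d) ℝ) (hAmeas : Measurable fun x i j => A x i j)
    (hAinv : ∀ x, IsUnit (A x).det)
    (C : ℝ) (hAbd : ∀ᵐ x ∂μ, matOpNorm (A x) < C ∧ matOpNorm (A x)⁻¹ < C)
    (ε : ℝ) (hε : 0 < ε) :
    ∃ δ > (0 : ℝ), ∀ B : X → Matrix (Fin d) (Fin d) ℝ,
      (Measurable fun x i j => B x i j) →
      (∀ x, IsUnit (B x).det) →
      (∀ᵐ x ∂μ, matOpNorm (B x) < C ∧ matOpNorm (B x)⁻¹ < C) →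
      μ {x | B x ≠ A x} < ENNReal.ofReal δ →
      lyapSum μ f d i B < lyapSum μ f d i A + ε :=
  lyapSum_semicontinuous_small_modification_general μ f hf d i hid A hAmeas hAinv C hAbd ε hε
end

section
/- The set F(φ, a, α) of C¹ volume-preserving diffeomorphisms f such that the set of points x where the Birkhoff limit φ_f(x) exists and is ≥ a has measure ≥ α, is a G_delta subset of the space of C¹ volume-preserving diffeomorphisms; consequently G(φ, a, ε) = F(φ, a, 1−ε) ∪ F(−φ, −a, 1−ε) is also G_delta. -/
/-!
Birkhoff's ergodic theorem for bounded observables, which follows from Garsia's maximal ergodic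
inequality applied on the invariant sets `{liminf < p < q < limsup}`, makes the averages of `φ`
converge off a null set. Hence `birkhoffGe f φ a` agrees a.e. with the decreasing intersection
`⋂_{k,N} ⋃_{n ≥ N} [φ_{f,n} > a - 1/(k+1)]`, so `α ≤ m (birkhoffGe f φ a)` iff `α` is below the
measure of every union `⋃_{n ≥ N} [φ_{f,n} > a - 1/(k+1)]`. Such a union is the slice at `f` of
an open subset of `C(M, M) × M`; by inner regularity and the tube lemma the measure of the slice is
lower semicontinuous in `f`, and superlevel sets `{α ≤ F}` of lower semicontinuous `F` are Gδ.
-/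

open MeasureTheory Filter
open scoped ENNReal

/-- The set where the Birkhoff average of `φ` under `f` exists and is at least `a`. -/
def birkhoffGe {M : Type*} (f : M → M) (φ : M → ℝ) (a : ℝ) : Set M :=
  {x | ∃ L : ℝ, a ≤ L ∧
    Tendsto (fun n : ℕ => (1 / (n : ℝ)) * ∑ j ∈ Finset.range n, φ (f^[j] x))
      atTop (nhds L)}

open Topology

lemma Real.limsup_eq_of_tendsto_sub {ι : Type*} {l : Filter ι} [l.NeBot] {u v : ι → ℝ}
    (hle : IsBoundedUnder (· ≤ ·) l u) (hge : IsBoundedUnder (· ≥ ·) l u)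
    (huv : Tendsto (v - u) l (𝓝 0)) : limsup v l = limsup u l := by
  rw [show v = u + (v - u) by abel]
  apply le_antisymm
  · simpa [huv.limsup_eq] using limsup_add_le hge hle huv.isCoboundedUnder_le huv.isBoundedUnder_le
  · simpa [huv.liminf_eq] using le_limsup_add hle hge.isCoboundedUnder_le huv.isBoundedUnder_le
      huv.isBoundedUnder_ge

lemma Real.liminf_eq_of_tendsto_sub {ι : Type*} {l : Filter ι} [l.NeBot] {u v : ι → ℝ}
    (hle : IsBoundedUnder (· ≤ ·) l u) (hge : IsBoundedUnder (· ≥ ·) l u)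
    (huv : Tendsto (v - u) l (𝓝 0)) : liminf v l = liminf u l := by
  rw [show v = (v - u) + u by abel]
  apply le_antisymm
  · simpa [huv.limsup_eq] using liminf_add_le huv.isBoundedUnder_ge huv.isBoundedUnder_le hge
      hle.isCoboundedUnder_ge
  · simpa [huv.liminf_eq] using le_liminf_add huv.isBoundedUnder_ge huv.isBoundedUnder_le hge
      hle.isCoboundedUnder_ge

lemma Filter.Tendsto.le_iff_forall_frequently_sub_inv_lt {u : ℕ → ℝ} {L : ℝ}
    (hu : Tendsto u atTop (𝓝 L)) (a : ℝ) :
    a ≤ L ↔ ∀ k : ℕ, ∃ᶠ n in atTop, a - ((k : ℝ) + 1)⁻¹ < u n := by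
  refine ⟨fun h k => (hu.eventually (lt_mem_nhds ?_)).frequently, fun h => not_lt.mp fun hlt => ?_⟩
  · have : (0 : ℝ) < ((k : ℝ) + 1)⁻¹ := by positivity
    linarith
  · obtain ⟨k, hk⟩ := exists_nat_one_div_lt (sub_pos.mpr hlt)
    have hLk : L < a - ((k : ℝ) + 1)⁻¹ := by rw [one_div] at hk; linarith
    obtain ⟨n, hn, hn'⟩ := ((h k).and_eventually (hu.eventually (gt_mem_nhds hLk))).exists
    exact hn.not_gt hn'

section BirkhoffSum

variable {X : Type*} {T : X → X} {h g : X → ℝ} {C : ℝ}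

/-- `birkhoffMax T h N = max_{n ≤ N} birkhoffSum T h n`, computed by the recursion on which
Garsia's proof of the maximal ergodic theorem rests. -/
noncomputable def birkhoffMax (T : X → X) (h : X → ℝ) : ℕ → X → ℝ
  | 0 => 0
  | N + 1 => fun x => max 0 (h x + birkhoffMax T h N (T x))

lemma birkhoffMax_nonneg (N : ℕ) (x : X) : 0 ≤ birkhoffMax T h N x := by
  cases N with
  | zero => exact le_rfl
  | succ N => exact le_max_left _ _

lemma birkhoffMax_le_succ (N : ℕ) (x : X) :
    birkhoffMax T h N x ≤ birkhoffMax T h (N + 1) x := by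
  induction N generalizing x with
  | zero => exact le_max_left _ _
  | succ N ih => exact max_le_max le_rfl (add_le_add le_rfl (ih (T x)))

lemma birkhoffSum_le_birkhoffMax {n N : ℕ} (hnN : n ≤ N) (x : X) :
    birkhoffSum T h n x ≤ birkhoffMax T h N x := by
  induction N generalizing n x with
  | zero => simpa [Nat.le_zero.mp hnN] using birkhoffMax_nonneg (T := T) (h := h) 0 x
  | succ N ih =>
    cases n with
    | zero => simpa using birkhoffMax_nonneg (N + 1) x
    | succ n =>
      rw [birkhoffSum_succ']
      exact le_max_of_le_right (add_le_add le_rfl (ih (n := n) (by omega) (T x)))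

lemma exists_birkhoffSum_eq_birkhoffMax (N : ℕ) (x : X) :
    ∃ n, birkhoffSum T h n x = birkhoffMax T h N x := by
  induction N generalizing x with
  | zero => exact ⟨0, birkhoffSum_zero _ _ _⟩
  | succ N ih =>
    obtain ⟨n, hn⟩ := ih (T x)
    rcases le_total (h x + birkhoffMax T h N (T x)) 0 with hle | hle
    · exact ⟨0, by simp [birkhoffMax, max_eq_left hle]⟩
    · exact ⟨n + 1, by simp [birkhoffSum_succ', hn, birkhoffMax, max_eq_right hle]⟩

lemma setOf_exists_birkhoffSum_pos :
    {x | ∃ n, 0 < birkhoffSum T h n x} = ⋃ N, {x | 0 < birkhoffMax T h (N + 1) x} := by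
  ext x
  simp only [Set.mem_ofPred_eq, Set.mem_iUnion]
  constructor
  · rintro ⟨n, hn⟩
    exact ⟨n, hn.trans_le (birkhoffSum_le_birkhoffMax (Nat.le_succ n) x)⟩
  · rintro ⟨N, hN⟩
    obtain ⟨n, hn⟩ := exists_birkhoffSum_eq_birkhoffMax (T := T) (h := h) (N + 1) x
    exact ⟨n, hn ▸ hN⟩

lemma birkhoffSum_indicator_of_preimage_eq {M : Type*} [AddCommMonoid M] {E : Set X}
    (hE : T ⁻¹' E = E) (f : X → M) (n : ℕ) (x : X) :
    birkhoffSum T (E.indicator f) n x = E.indicator (birkhoffSum T f n) x := by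
  have hiter (k : ℕ) : T^[k] x ∈ E ↔ x ∈ E := by
    rw [← Set.mem_preimage, Set.preimage_iterate_eq, Function.iterate_fixed hE]
  by_cases hx : x ∈ E
  · rw [Set.indicator_of_mem hx]
    exact Finset.sum_congr rfl fun k _ => Set.indicator_of_mem ((hiter k).2 hx) _
  · rw [Set.indicator_of_notMem hx]
    exact Finset.sum_eq_zero fun k _ => Set.indicator_of_notMem (mt (hiter k).1 hx) _

lemma exists_mul_lt_birkhoffSum {c : ℝ} {x : X}
    (h : ∃ᶠ n in atTop, c < birkhoffAverage ℝ T g n x) : ∃ n : ℕ, c * n < birkhoffSum T g n x := by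
  obtain ⟨n, hn, hn1⟩ := (h.and_eventually (eventually_ge_atTop 1)).exists
  rw [birkhoffAverage, smul_eq_mul, lt_inv_mul_iff₀ (by exact_mod_cast hn1)] at hn
  exact ⟨n, by linarith⟩

lemma abs_birkhoffAverage_le (hg : ∀ x, |g x| ≤ C) (n : ℕ) (x : X) :
    |birkhoffAverage ℝ T g n x| ≤ C := by
  rcases n.eq_zero_or_pos with rfl | hn
  · simpa using (abs_nonneg _).trans (hg x)
  · rw [birkhoffAverage, smul_eq_mul, abs_mul, abs_inv, Nat.abs_cast,
      inv_mul_le_iff₀ (by positivity)]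
    calc |birkhoffSum T g n x| ≤ ∑ k ∈ Finset.range n, |g (T^[k] x)| :=
          Finset.abs_sum_le_sum_abs _ _
      _ ≤ n * C := (Finset.sum_le_sum fun k _ => hg (T^[k] x)).trans_eq (by simp)

lemma isBoundedUnder_le_birkhoffAverage (hg : ∀ x, |g x| ≤ C) (x : X) :
    IsBoundedUnder (· ≤ ·) atTop (birkhoffAverage ℝ T g · x) :=
  isBoundedUnder_of ⟨C, fun n => (abs_le.mp (abs_birkhoffAverage_le hg n x)).2⟩

lemma isBoundedUnder_ge_birkhoffAverage (hg : ∀ x, |g x| ≤ C) (x : X) :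
    IsBoundedUnder (· ≥ ·) atTop (birkhoffAverage ℝ T g · x) :=
  isBoundedUnder_of ⟨-C, fun n => (abs_le.mp (abs_birkhoffAverage_le hg n x)).1⟩

lemma tendsto_birkhoffAverage_apply_sub (hg : ∀ x, |g x| ≤ C) (x : X) :
    Tendsto ((birkhoffAverage ℝ T g · (T x)) - (birkhoffAverage ℝ T g · x)) atTop (𝓝 0) :=
  tendsto_birkhoffAverage_apply_sub_birkhoffAverage' ℝ
    ((Metric.isBounded_Icc (-C) C).subset (Set.range_subset_iff.2 fun x => abs_le.mp (hg x))) T x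

lemma limsup_birkhoffAverage_apply (hg : ∀ x, |g x| ≤ C) (x : X) :
    limsup (birkhoffAverage ℝ T g · (T x)) atTop = limsup (birkhoffAverage ℝ T g · x) atTop :=
  Real.limsup_eq_of_tendsto_sub (isBoundedUnder_le_birkhoffAverage hg x)
    (isBoundedUnder_ge_birkhoffAverage hg x) (tendsto_birkhoffAverage_apply_sub hg x)

lemma liminf_birkhoffAverage_apply (hg : ∀ x, |g x| ≤ C) (x : X) :
    liminf (birkhoffAverage ℝ T g · (T x)) atTop = liminf (birkhoffAverage ℝ T g · x) atTop :=
  Real.liminf_eq_of_tendsto_sub (isBoundedUnder_le_birkhoffAverage hg x)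
    (isBoundedUnder_ge_birkhoffAverage hg x) (tendsto_birkhoffAverage_apply_sub hg x)

variable [MeasurableSpace X] {μ : Measure X}

lemma measurable_birkhoffAverage (hT : Measurable T) (hg : Measurable g) (n : ℕ) :
    Measurable (birkhoffAverage ℝ T g n) :=
  have hS : Measurable (birkhoffSum T g n) :=
    Finset.measurable_sum (Finset.range n) fun k _ => hg.comp (hT.iterate k)
  hS.const_smul ((n : ℝ)⁻¹)

lemma integrable_birkhoffMax (hT : MeasurePreserving T μ μ) (hh : Integrable h μ) (N : ℕ) :
    Integrable (birkhoffMax T h N) μ := by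
  induction N with
  | zero => exact integrable_zero _ _ _
  | succ N ih => exact (integrable_zero _ _ _).sup (hh.add (hT.integrable_comp_of_integrable ih))

lemma MeasureTheory.MeasurePreserving.integral_comp_of_integrable {f : X → ℝ}
    (hT : MeasurePreserving T μ μ) (hf : Integrable f μ) : ∫ x, f (T x) ∂μ = ∫ x, f x ∂μ := by
  rw [← integral_map hT.aemeasurable (by rw [hT.map_eq]; exact hf.aestronglyMeasurable), hT.map_eq]

lemma setIntegral_birkhoffMax_pos_nonneg (hT : MeasurePreserving T μ μ) (hh : Integrable h μ)
    (N : ℕ) : 0 ≤ ∫ x in {x | 0 < birkhoffMax T h (N + 1) x}, h x ∂μ := by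
  set P := birkhoffMax T h (N + 1)
  set E := {x | 0 < P x}
  have hP : Integrable P μ := integrable_birkhoffMax hT hh _
  have hPT : Integrable (P ∘ T) μ := hT.integrable_comp_of_integrable hP
  -- On `E` the recursion gives `P = h + birkhoffMax T h N ∘ T ≤ h + P ∘ T`.
  have hle : ∀ x ∈ E, P x - P (T x) ≤ h x := fun x hx => by
    have hPx : P x = h x + birkhoffMax T h N (T x) :=
      max_eq_right ((lt_max_iff.mp hx).resolve_left (lt_irrefl 0)).le
    linarith [birkhoffMax_le_succ (T := T) (h := h) N (T x)]
  have hPE : ∫ x in E, P x ∂μ = ∫ x, P x ∂μ :=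
    setIntegral_eq_integral_of_forall_compl_eq_zero fun x hx =>
      le_antisymm (not_lt.mp hx) (birkhoffMax_nonneg _ _)
  have hPTE : ∫ x in E, P (T x) ∂μ ≤ ∫ x, P x ∂μ :=
    (setIntegral_le_integral hPT (ae_of_all _ fun x => birkhoffMax_nonneg _ _)).trans_eq
      (hT.integral_comp_of_integrable hP)
  calc 0 ≤ ∫ x in E, P x ∂μ - ∫ x in E, P (T x) ∂μ := by linarith
    _ = ∫ x in E, (P x - P (T x)) ∂μ := (integral_sub hP.integrableOn hPT.integrableOn).symm
    _ ≤ ∫ x in E, h x ∂μ := setIntegral_mono_on₀ (hP.sub hPT).integrableOn hh.integrableOn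
        (nullMeasurableSet_lt aemeasurable_const hP.aemeasurable) hle

theorem MeasureTheory.MeasurePreserving.setIntegral_exists_birkhoffSum_pos_nonneg
    (hT : MeasurePreserving T μ μ) (hh : Integrable h μ) :
    0 ≤ ∫ x in {x | ∃ n, 0 < birkhoffSum T h n x}, h x ∂μ := by
  rw [setOf_exists_birkhoffSum_pos]
  refine ge_of_tendsto' (tendsto_setIntegral_of_monotone₀ (fun N => ?_) (fun N N' hNN' x hx => ?_)
    hh.integrableOn) (setIntegral_birkhoffMax_pos_nonneg hT hh)
  · exact nullMeasurableSet_lt aemeasurable_const (integrable_birkhoffMax hT hh _).aemeasurable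
  · exact hx.trans_le (monotone_nat_of_le_succ (fun N => birkhoffMax_le_succ N x)
      (Nat.succ_le_succ hNN'))

theorem MeasureTheory.MeasurePreserving.mul_measureReal_le_setIntegral [IsFiniteMeasure μ]
    (hT : MeasurePreserving T μ μ) (hg : Integrable g μ) {E : Set X}
    (hE : MeasurableSet E) (hTE : T ⁻¹' E = E) {c : ℝ}
    (hc : ∀ x ∈ E, ∃ n : ℕ, c * n < birkhoffSum T g n x) :
    c * μ.real E ≤ ∫ x in E, g x ∂μ := by
  -- Apply the maximal ergodic theorem to `1_E (g - c)`, whose set of positive sums is `E`.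
  have hsum (n : ℕ) (x : X) : birkhoffSum T (E.indicator (g - fun _ => c)) n x =
      E.indicator (fun y => birkhoffSum T g n y - n * c) x := by
    rw [birkhoffSum_indicator_of_preimage_eq hTE]
    congr 1
    ext y
    simp [birkhoffSum]
  have hset : {x | ∃ n, 0 < birkhoffSum T (E.indicator (g - fun _ => c)) n x} = E := by
    ext x
    simp only [Set.mem_ofPred_eq, hsum]
    by_cases hx : x ∈ E
    · simp only [Set.indicator_of_mem hx, sub_pos, hx, iff_true]
      obtain ⟨n, hn⟩ := hc x hx
      exact ⟨n, by linarith⟩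
    · simp [hx]
  have hmax := hT.setIntegral_exists_birkhoffSum_pos_nonneg
    ((hg.sub (integrable_const c)).indicator hE)
  rw [hset, setIntegral_congr_fun hE fun x hx => Set.indicator_of_mem hx _] at hmax
  simp only [Pi.sub_apply] at hmax
  rw [integral_sub hg.integrableOn (integrableOn_const (measure_ne_top μ E)), setIntegral_const,
    smul_eq_mul] at hmax
  linarith

theorem MeasureTheory.MeasurePreserving.measure_liminf_lt_lt_limsup_birkhoffAverage
    [IsFiniteMeasure μ] (hT : MeasurePreserving T μ μ) (hgm : Measurable g)
    (hg : ∀ x, |g x| ≤ C) {p q : ℝ} (hpq : p < q) :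
    μ {x | liminf (birkhoffAverage ℝ T g · x) atTop < p ∧
      q < limsup (birkhoffAverage ℝ T g · x) atTop} = 0 := by
  set E := {x | liminf (birkhoffAverage ℝ T g · x) atTop < p ∧
    q < limsup (birkhoffAverage ℝ T g · x) atTop}
  have hA := measurable_birkhoffAverage hT.measurable hgm
  have hE : MeasurableSet E := (measurableSet_lt (Measurable.liminf hA) measurable_const).inter
    (measurableSet_lt measurable_const (Measurable.limsup hA))
  have hTE : T ⁻¹' E = E := by
    ext x
    simp only [E, Set.mem_preimage, Set.mem_ofPred_eq, limsup_birkhoffAverage_apply hg,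
      liminf_birkhoffAverage_apply hg]
  have hgi : Integrable g μ :=
    Integrable.of_bound hgm.aestronglyMeasurable C (ae_of_all _ fun x => hg x)
  have hq : q * μ.real E ≤ ∫ x in E, g x ∂μ :=
    hT.mul_measureReal_le_setIntegral hgi hE hTE fun x hx => exists_mul_lt_birkhoffSum <|
      frequently_lt_of_lt_limsup (isBoundedUnder_ge_birkhoffAverage hg x).isCoboundedUnder_le hx.2
  have hp : -p * μ.real E ≤ ∫ x in E, (-g) x ∂μ :=
    hT.mul_measureReal_le_setIntegral hgi.neg hE hTE fun x hx => exists_mul_lt_birkhoffSum <|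
      (frequently_lt_of_liminf_lt (isBoundedUnder_le_birkhoffAverage hg x).isCoboundedUnder_ge
        hx.1).mono fun n hn => by simpa [birkhoffAverage_neg] using hn
  simp only [Pi.neg_apply, integral_neg] at hp
  exact (measureReal_eq_zero_iff).mp (le_antisymm (by nlinarith) measureReal_nonneg)

theorem MeasureTheory.MeasurePreserving.ae_tendsto_birkhoffAverage [IsFiniteMeasure μ]
    (hT : MeasurePreserving T μ μ) (hgm : Measurable g) (hg : ∀ x, |g x| ≤ C) :
    ∀ᵐ x ∂μ, ∃ L, Tendsto (birkhoffAverage ℝ T g · x) atTop (𝓝 L) := by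
  rw [ae_iff]
  refine measure_mono_null (fun x hx => ?_) (measure_iUnion_null fun p : ℚ =>
    measure_iUnion_null fun q : ℚ => measure_iUnion_null fun hpq : (p : ℝ) < q =>
      hT.measure_liminf_lt_lt_limsup_birkhoffAverage hgm hg hpq)
  have hle := isBoundedUnder_le_birkhoffAverage (T := T) hg x
  have hge := isBoundedUnder_ge_birkhoffAverage (T := T) hg x
  have hlt : liminf (birkhoffAverage ℝ T g · x) atTop < limsup (birkhoffAverage ℝ T g · x) atTop :=
    (liminf_le_limsup hle hge).lt_of_ne fun heq =>
      hx ⟨_, tendsto_of_liminf_eq_limsup heq rfl hle hge⟩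
  obtain ⟨p, hp, hpq⟩ := exists_rat_btwn hlt
  obtain ⟨q, hpq, hq⟩ := exists_rat_btwn hpq
  simp only [Set.mem_iUnion]
  exact ⟨p, q, by exact_mod_cast hpq, hp, hq⟩

end BirkhoffSum

section BirkhoffTail

variable {X : Type*}

/-- For `i = (k, N)`, the paper's `⋃_{n ≥ N} [φ_{f,n} > b]` with `b = a - 1/(k+1)`. -/
def birkhoffTail (f : X → X) (φ : X → ℝ) (a : ℝ) (i : ℕ × ℕ) : Set X :=
  ⋃ n ≥ i.2, {x | a - ((i.1 : ℝ) + 1)⁻¹ < birkhoffAverage ℝ f φ n x}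

lemma antitone_birkhoffTail (f : X → X) (φ : X → ℝ) (a : ℝ) : Antitone (birkhoffTail f φ a) := by
  rintro ⟨k, N⟩ ⟨k', N'⟩ ⟨hk, hN⟩
  have hk' : (k : ℝ) ≤ k' := Nat.cast_le.mpr hk
  have hb : a - ((k : ℝ) + 1)⁻¹ ≤ a - ((k' : ℝ) + 1)⁻¹ := by gcongr
  exact Set.iUnion₂_mono' fun n hn => ⟨n, hN.trans hn, fun x hx => hb.trans_lt hx⟩

lemma birkhoffGe_eq (f : X → X) (φ : X → ℝ) (a : ℝ) :
    birkhoffGe f φ a = {x | ∃ L, a ≤ L ∧ Tendsto (birkhoffAverage ℝ f φ · x) atTop (𝓝 L)} := by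
  simp only [birkhoffGe, birkhoffAverage, birkhoffSum, one_div, smul_eq_mul]

variable [MeasurableSpace X] {μ : Measure X} {f : X → X} {φ : X → ℝ}

lemma measurableSet_birkhoffTail (hf : Measurable f) (hφ : Measurable φ) (a : ℝ) (i : ℕ × ℕ) :
    MeasurableSet (birkhoffTail f φ a i) :=
  MeasurableSet.iUnion fun n => MeasurableSet.iUnion fun _ =>
    measurableSet_lt measurable_const (measurable_birkhoffAverage hf hφ n)

lemma MeasureTheory.MeasurePreserving.birkhoffGe_ae_eq_iInter_birkhoffTail [IsFiniteMeasure μ]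
    (hf : MeasurePreserving f μ μ) (hφm : Measurable φ) {C : ℝ} (hφ : ∀ x, |φ x| ≤ C) (a : ℝ) :
    birkhoffGe f φ a =ᵐ[μ] ⋂ i, birkhoffTail f φ a i := by
  filter_upwards [hf.ae_tendsto_birkhoffAverage hφm hφ] with x ⟨L, hL⟩
  have hge : x ∈ birkhoffGe f φ a ↔ a ≤ L := by
    rw [birkhoffGe_eq]
    exact ⟨fun ⟨L', hL', hL'L⟩ => tendsto_nhds_unique hL'L hL ▸ hL', fun h => ⟨L, h, hL⟩⟩
  change (x ∈ birkhoffGe f φ a) = (x ∈ ⋂ i, birkhoffTail f φ a i)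
  refine propext (hge.trans ((hL.le_iff_forall_frequently_sub_inv_lt a).trans ?_))
  simp only [Set.mem_iInter, Prod.forall, birkhoffTail, Set.mem_iUnion, Set.mem_ofPred_eq,
    frequently_atTop, exists_prop]

lemma MeasureTheory.MeasurePreserving.measure_birkhoffGe_eq_iInf [IsFiniteMeasure μ]
    (hf : MeasurePreserving f μ μ) (hφm : Measurable φ) {C : ℝ} (hφ : ∀ x, |φ x| ≤ C) (a : ℝ) :
    μ (birkhoffGe f φ a) = ⨅ i, μ (birkhoffTail f φ a i) := by
  rw [measure_congr (hf.birkhoffGe_ae_eq_iInter_birkhoffTail hφm hφ a)]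
  exact (antitone_birkhoffTail f φ a).measure_iInter
    (fun i => (measurableSet_birkhoffTail hf.measurable hφm a i).nullMeasurableSet)
    ⟨0, measure_ne_top _ _⟩

end BirkhoffTail

section ContinuousMaps

variable {X : Type*} [TopologicalSpace X] [LocallyCompactSpace X] {φ : X → ℝ}

lemma continuous_iterate_apply (n : ℕ) : Continuous fun p : C(X, X) × X => p.1^[n] p.2 := by
  induction n with
  | zero => exact continuous_snd
  | succ n ih =>
    simp only [Function.iterate_succ_apply']
    exact continuous_eval.comp (continuous_fst.prodMk ih)

lemma continuous_birkhoffAverage_apply (hφ : Continuous φ) (n : ℕ) :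
    Continuous fun p : C(X, X) × X => birkhoffAverage ℝ p.1 φ n p.2 :=
  have hS : Continuous fun p : C(X, X) × X => birkhoffSum p.1 φ n p.2 :=
    continuous_finsetSum _ fun k _ => hφ.comp (continuous_iterate_apply k)
  hS.const_smul ((n : ℝ)⁻¹)

lemma isOpen_setOf_mem_birkhoffTail (hφ : Continuous φ) (a : ℝ) (i : ℕ × ℕ) :
    IsOpen {p : C(X, X) × X | p.2 ∈ birkhoffTail p.1 φ a i} := by
  simp only [birkhoffTail, Set.mem_iUnion, Set.ofPred_exists]
  exact isOpen_iUnion fun n => isOpen_iUnion fun _ =>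
    isOpen_lt continuous_const (continuous_birkhoffAverage_apply hφ n)

end ContinuousMaps

lemma LowerSemicontinuous.isGδ_setOf_le {Y β : Type*} [TopologicalSpace Y] [LinearOrder β]
    [TopologicalSpace β] [OrderTopology β] [DenselyOrdered β] [TopologicalSpace.SeparableSpace β]
    {F : Y → β} (hF : LowerSemicontinuous F) (b : β) : IsGδ {y | b ≤ F y} := by
  obtain ⟨D, hDc, hD⟩ := TopologicalSpace.exists_countable_dense β
  have hset : {y | b ≤ F y} = ⋂ d ∈ {d ∈ D | d < b}, F ⁻¹' Set.Ioi d := by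
    ext y
    simp only [Set.mem_ofPred_eq, Set.mem_iInter, Set.mem_preimage, Set.mem_Ioi]
    refine ⟨fun hy d hd => hd.2.trans_le hy, fun h => not_lt.mp fun hlt => ?_⟩
    obtain ⟨d, hdD, hFd, hdb⟩ := hD.exists_between hlt
    exact (h d ⟨hdD, hdb⟩).not_gt hFd
  rw [hset]
  exact IsGδ.biInter (hDc.mono (Set.sep_subset _ _)) fun d _ => (hF.isOpen_preimage d).isGδ

lemma lowerSemicontinuous_measure_slice {Y X : Type*} [TopologicalSpace Y] [TopologicalSpace X]
    [MeasurableSpace X] (μ : Measure X) [μ.Regular] {O : Set (Y × X)} (hO : IsOpen O) :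
    LowerSemicontinuous fun y => μ {x | (y, x) ∈ O} := by
  intro y c hc
  obtain ⟨K, hKO, hK, hcK⟩ := (hO.preimage (Continuous.prodMk_right y)).exists_lt_isCompact hc
  obtain ⟨U, V, hU, -, hyU, hKV, hUV⟩ := generalized_tube_lemma isCompact_singleton hK hO
    (by rintro ⟨y', x⟩ ⟨rfl, hx⟩; exact hKO hx)
  filter_upwards [hU.mem_nhds (hyU rfl)] with y' hy'
  exact hcK.trans_le (measure_mono fun x hx => hUV ⟨hy', hKV hx⟩)

theorem isGδ_setOf_le_measure_birkhoffGe {M : Type*} [TopologicalSpace M] [CompactSpace M]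
    [LocallyCompactSpace M] [MeasurableSpace M] [OpensMeasurableSpace M] (μ : Measure M)
    [IsFiniteMeasure μ] [μ.Regular] (φ : C(M, ℝ)) (a : ℝ) (α : ℝ≥0∞) :
    IsGδ {f : {g : C(M, M) // MeasurePreserving g μ μ} | α ≤ μ (birkhoffGe f.1 φ a)} := by
  have hφ (x : M) : |φ x| ≤ ‖φ‖ := by simpa [Real.norm_eq_abs] using φ.norm_coe_le_norm x
  have hμ (f : {g : C(M, M) // MeasurePreserving g μ μ}) :
      μ (birkhoffGe f.1 φ a) = ⨅ i, μ (birkhoffTail f.1 φ a i) :=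
    f.2.measure_birkhoffGe_eq_iInf φ.continuous.measurable hφ a
  simp_rw [hμ, le_iInf_iff, Set.ofPred_forall]
  exact IsGδ.iInter fun i => LowerSemicontinuous.isGδ_setOf_le (lowerSemicontinuous_measure_slice μ
    ((isOpen_setOf_mem_birkhoffTail φ.continuous a i).preimage
      (continuous_subtype_val.prodMap continuous_id))) α

/-- The set `F(φ, a, α)` of volume-preserving maps `f` for which the set of points whose
Birkhoff average exists and is `≥ a` has measure `≥ α` is a Gδ subset of the space of
volume-preserving maps; consequently `G(φ, a, ε) = F(φ, a, 1−ε) ∪ F(−φ, −a, 1−ε)` is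
also Gδ. -/
theorem birkhoff_measure_set_isGδ {M : Type*} [MetricSpace M] [CompactSpace M]
    [MeasurableSpace M] [BorelSpace M] (m : Measure M) [IsProbabilityMeasure m]
    (φ : C(M, ℝ)) (a : ℝ) (α ε : ℝ≥0∞) :
    IsGδ {f : {g : C(M, M) // MeasurePreserving g m m} |
        α ≤ m (birkhoffGe (⇑f.1) (⇑φ) a)} ∧
    IsGδ ({f : {g : C(M, M) // MeasurePreserving g m m} |
        1 - ε ≤ m (birkhoffGe (⇑f.1) (⇑φ) a)} ∪
      {f : {g : C(M, M) // MeasurePreserving g m m} |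
        1 - ε ≤ m (birkhoffGe (⇑f.1) (fun x => -φ x) (-a))}) :=
  ⟨isGδ_setOf_le_measure_birkhoffGe m φ a α,
    (isGδ_setOf_le_measure_birkhoffGe m φ a (1 - ε)).union
      (isGδ_setOf_le_measure_birkhoffGe m (-φ) (-a) (1 - ε))⟩
end
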